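/- Fix an integer n ≥ 3. If x ∈ [0,1] is such that the points x, T(x), …, T^{n−1}(x) are pairwise distinct and Pat(x, T, n) = σ_n, then x lies in the open interval ( 2^{n−2}/(2^{n−1}+1) , 2^{n−2}/(2^{n−1}−1) ); that is, the pattern σ_n is realized by the full tent map T only on this interval. -/

import Mathlib

/-!
By the pattern `σ_n`, the orbit `x, T x, …, T^{n-1} x` of `x` satisfies
`T² x < T³ x < ⋯ < T^{n-1} x < x < T x`. From `x < T x` we get `x < 2/3`; a point of
`(1/2, x)` would be sent above `2 - 2x > x`, so `T² x, …, T^{n-2} x` all lie in `[0, 1/2]`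
where `T` doubles, and `T^{n-1} x = 2^{n-3} T² x`. Moreover `T x > 1/2` (otherwise
`T² x > x`), so `T² x = 2|2x - 1|` and the inequality `T^{n-1} x < x` becomes
`2^{n-2} |2x - 1| < x`, which describes exactly the interval of the theorem.
-/

open Set

/-- The symmetric tent map of height `μ`:
`T_μ(x) = 2μx` for `x ≤ 1/2` and `T_μ(x) = 2μ(1-x)` for `x > 1/2`. -/
noncomputable def tentMap (μ : ℝ) (x : ℝ) : ℝ :=
  if x ≤ 1/2 then 2*μ*x else 2*μ*(1-x)

/-- The permutation σ_n = (n-1) n 1 2 ⋯ (n-2) (one-line notation, 1-indexed), i.e. in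
0-indexed terms the map `i ↦ i + (n-2) (mod n)` on `Fin n`. -/
def sigmaPerm (n : ℕ) : Equiv.Perm (Fin n) := finRotate n ^ (n - 2)

lemma coe_finRotate_pow_apply {n : ℕ} (k : ℕ) (i : Fin n) :
    (((finRotate n ^ k) i : Fin n) : ℕ) = ((i : ℕ) + k) % n := by
  cases n with
  | zero => exact i.elim0
  | succ m =>
    induction k with
    | zero => simp [Nat.mod_eq_of_lt i.isLt]
    | succ k ih =>
      rw [pow_succ', Equiv.Perm.mul_apply, finRotate_apply, Fin.val_add, ih,
        Fin.val_one', ← Nat.add_mod, ← Nat.add_assoc]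

lemma coe_sigmaPerm_of_lt_two {n : ℕ} (hn : 2 ≤ n) (i : Fin n) (hi : (i : ℕ) < 2) :
    (sigmaPerm n i : ℕ) = i + (n - 2) := by
  rw [sigmaPerm, coe_finRotate_pow_apply, Nat.mod_eq_of_lt (by omega)]

lemma coe_sigmaPerm_of_two_le {n : ℕ} (i : Fin n) (hi : 2 ≤ (i : ℕ)) :
    (sigmaPerm n i : ℕ) = i - 2 := by
  rw [sigmaPerm, coe_finRotate_pow_apply, show (i : ℕ) + (n - 2) = (i - 2) + n by omega,
    Nat.add_mod_right, Nat.mod_eq_of_lt (by omega)]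

theorem orbit_order_of_pattern_sigmaPerm {α : Type*} [Preorder α] {f : α → α} {x : α} {n : ℕ}
    (hn : 2 ≤ n) (hpat : ∀ i j : Fin n, sigmaPerm n i < sigmaPerm n j ↔ f^[i] x < f^[j] x) :
    x < f x ∧ ∀ i, 2 ≤ i → i < n → f^[i] x < x := by
  refine ⟨?_, fun i h2 hi => ?_⟩
  · refine (hpat ⟨0, by omega⟩ ⟨1, by omega⟩).1 ?_
    rw [Fin.lt_def, coe_sigmaPerm_of_lt_two hn _ (by simp),
      coe_sigmaPerm_of_lt_two hn _ (by simp)]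
    show 0 + (n - 2) < 1 + (n - 2)
    omega
  · refine (hpat ⟨i, hi⟩ ⟨0, by omega⟩).1 ?_
    rw [Fin.lt_def, coe_sigmaPerm_of_two_le _ h2,
      coe_sigmaPerm_of_lt_two hn _ (by simp)]
    show i - 2 < 0 + (n - 2)
    omega

lemma tentMap_one_of_le_half {y : ℝ} (h : y ≤ 1 / 2) : tentMap 1 y = 2 * y := by
  rw [tentMap, if_pos h]
  ring

lemma tentMap_one_of_half_lt {y : ℝ} (h : 1 / 2 < y) : tentMap 1 y = 2 * (1 - y) := by
  rw [tentMap, if_neg (not_le.2 h)]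
  ring

lemma tentMap_one_iterate_of_le_half {y : ℝ} {k : ℕ}
    (h : ∀ i < k, (tentMap 1)^[i] y ≤ 1 / 2) : (tentMap 1)^[k] y = 2 ^ k * y := by
  induction k with
  | zero => simp
  | succ k ih =>
    rw [Function.iterate_succ_apply', tentMap_one_of_le_half (h k k.lt_succ_self),
      ih fun i hi => h i (hi.trans k.lt_succ_self), pow_succ]
    ring

lemma lt_two_thirds_of_lt_tentMap_one {x : ℝ} (h : x < tentMap 1 x) : x < 2 / 3 := by
  rcases le_or_gt x (1 / 2) with hx | hx
  · linarith
  · rw [tentMap_one_of_half_lt hx] at h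
    linarith

lemma lt_tentMap_one_of_mem_Ioo {x y : ℝ} (hx : x < 2 / 3) (hy : y ∈ Ioo (1 / 2) x) :
    x < tentMap 1 y := by
  rw [tentMap_one_of_half_lt hy.1]
  linarith [hy.2]

lemma half_lt_tentMap_one {x : ℝ} (h₁ : x < tentMap 1 x) (h₂ : tentMap 1 (tentMap 1 x) < x) :
    1 / 2 < tentMap 1 x := by
  by_contra! hT
  rw [tentMap_one_of_le_half hT] at h₂
  rcases le_or_gt x (1 / 2) with hx | hx
  · rw [tentMap_one_of_le_half hx] at h₁ h₂
    linarith
  · rw [tentMap_one_of_half_lt hx] at h₁ hT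
    linarith

lemma tentMap_one_tentMap_one_of_half_lt {x : ℝ} (h : 1 / 2 < tentMap 1 x) :
    tentMap 1 (tentMap 1 x) = 2 * |2 * x - 1| := by
  rw [tentMap_one_of_half_lt h]
  rcases le_or_gt x (1 / 2) with hx | hx
  · rw [tentMap_one_of_le_half hx, abs_of_nonpos (by linarith)]
    ring
  · rw [tentMap_one_of_half_lt hx, abs_of_pos (by linarith)]
    ring

theorem pow_mul_abs_lt_of_orbit_order {x : ℝ} {k : ℕ} (h₁ : x < tentMap 1 x)
    (hbelow : ∀ i, 2 ≤ i → i ≤ k + 2 → (tentMap 1)^[i] x < x) :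
    2 ^ (k + 1) * |2 * x - 1| < x := by
  have hx : x < 2 / 3 := lt_two_thirds_of_lt_tentMap_one h₁
  have hT2 : (tentMap 1)^[2] x = 2 * |2 * x - 1| :=
    tentMap_one_tentMap_one_of_half_lt (half_lt_tentMap_one h₁ (hbelow 2 le_rfl (by omega)))
  have hhalf : ∀ i < k, (tentMap 1)^[i] ((tentMap 1)^[2] x) ≤ 1 / 2 := by
    intro i hi
    by_contra! hgt
    rw [← Function.iterate_add_apply] at hgt
    have hnext := lt_tentMap_one_of_mem_Ioo hx ⟨hgt, hbelow (i + 2) (by omega) (by omega)⟩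
    rw [← Function.iterate_succ_apply' (tentMap 1)] at hnext
    exact (hbelow (i + 2).succ (by omega) (by omega)).not_gt hnext
  calc 2 ^ (k + 1) * |2 * x - 1| = (tentMap 1)^[k] ((tentMap 1)^[2] x) := by
        rw [tentMap_one_iterate_of_le_half hhalf, hT2, pow_succ]
        ring
    _ = (tentMap 1)^[k + 2] x := (Function.iterate_add_apply _ _ _ _).symm
    _ < x := hbelow (k + 2) (by omega) le_rfl

lemma mem_Ioo_of_mul_abs_two_mul_sub_one_lt {m x : ℝ} (hm : 1 ≤ m) (h : m * |2 * x - 1| < x) :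
    x ∈ Ioo (m / (2 * m + 1)) (m / (2 * m - 1)) := by
  have hm₀ : 0 < m := by linarith
  obtain ⟨h₁, h₂⟩ := abs_lt.1 (by rwa [abs_mul, abs_of_pos hm₀] : |m * (2 * x - 1)| < x)
  constructor
  · rw [div_lt_iff₀ (by linarith)]
    linarith
  · rw [lt_div_iff₀ (by linarith)]
    linarith

theorem pattern_only_near_half (n : ℕ) (hn : 3 ≤ n) (x : ℝ)
    (hpat : ∀ i j : Fin n, sigmaPerm n i < sigmaPerm n j ↔
      (tentMap 1)^[(i:ℕ)] x < (tentMap 1)^[(j:ℕ)] x) :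
    x ∈ Ioo ((2:ℝ)^(n-2)/((2:ℝ)^(n-1)+1)) ((2:ℝ)^(n-2)/((2:ℝ)^(n-1)-1)) := by
  obtain ⟨h₁, hbelow⟩ := orbit_order_of_pattern_sigmaPerm (by omega) hpat
  have h := pow_mul_abs_lt_of_orbit_order (k := n - 3) h₁ fun i h2 hi => hbelow i h2 (by omega)
  rw [show n - 3 + 1 = n - 2 by omega] at h
  rw [show n - 1 = n - 2 + 1 by omega, pow_succ, mul_comm]
  exact mem_Ioo_of_mul_abs_two_mul_sub_one_lt (one_le_pow₀ (by norm_num)) h
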